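/- arXiv:1607.00806 — 3 statements merged into one kernel-verified Lean document; each statement's English description precedes it below -/
import Mathlib

section
/- Let Ψ(t) = (1, t, t², …, t^{p-1})ᵀ and A² = ∫_{-1}^{1} Ψ(t) Ψ(t)ᵀ dt. Then the polynomial P(t) = Ψ(t)ᵀ A⁻² Ψ(t) satisfies max_{t∈[-1,1]} P(t) = p²/2, with the maximum attained at t = ±1. -/
open Polynomial MeasureTheory intervalIntegral Set Matrix

noncomputable def psin (n : ℕ) : ℝ[X] := (X ^ 2 - 1) ^ n

noncomputable def leg (n : ℕ) : ℝ[X] :=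
  Polynomial.C (((2:ℝ) ^ n * n.factorial)⁻¹) * (derivative^[n] (psin n))

noncomputable def In (n : ℕ) : ℝ := ∫ t in (-1:ℝ)..1, (1 - t^2)^n

noncomputable def cn (k : ℕ) : ℝ := Real.sqrt ((2*(k:ℝ)+1)/2)

lemma eval_iterate_derivative_psin {n k : ℕ} (hk : k < n) {x : ℝ} (hx : x ^ 2 = 1) :
    ((derivative^[k] (psin n)).eval x) = 0 := by
  obtain ⟨q, hq⟩ := Polynomial.pow_sub_dvd_iterate_derivative_pow (X ^ 2 - 1 : ℝ[X]) n k
  rw [psin, hq]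
  have h1 : n - k ≠ 0 := Nat.sub_ne_zero_of_lt hk
  simp [eval_pow, hx, zero_pow h1]

lemma sub_C_eq (a : ℝ) : (X - Polynomial.C a : ℝ[X]) = X + Polynomial.C (-a) := by
  rw [sub_eq_add_neg, ← map_neg]

lemma eval_iterate_derivative_root (n : ℕ) (a : ℝ) (q : ℝ[X]) :
    ((derivative^[n] ((X - Polynomial.C a) ^ n * q)).eval a) = n.factorial * q.eval a := by
  rw [Polynomial.iterate_derivative_mul, Polynomial.eval_finset_sum]
  rw [Finset.sum_eq_single 0]
  · rw [sub_C_eq a, Polynomial.iterate_derivative_X_add_pow]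
    simp [Nat.descFactorial_self]
  · intro k hk hk0
    have hkn : k ≤ n := Nat.lt_succ_iff.mp (Finset.mem_range.mp hk)
    rw [sub_C_eq a, Polynomial.iterate_derivative_X_add_pow]
    have h1 : n - (n - k) ≠ 0 := by omega
    simp [zero_pow h1]
  · simp

lemma psin_factor_one (n : ℕ) : psin n = (X - Polynomial.C (1:ℝ)) ^ n * (X + 1) ^ n := by
  rw [psin, ← mul_pow]; congr 1; ring_nf; rw [Polynomial.C_1]; ring

lemma psin_factor_neg_one (n : ℕ) : psin n = (X - Polynomial.C (-1:ℝ)) ^ n * (X - 1) ^ n := by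
  rw [psin, ← mul_pow]; congr 1; rw [map_neg, Polynomial.C_1]; ring

lemma leg_eval_one (n : ℕ) : (leg n).eval 1 = 1 := by
  rw [leg, psin_factor_one, eval_mul, eval_C, eval_iterate_derivative_root]
  have : ((X:ℝ[X]) + 1).eval 1 = 2 := by simp; norm_num
  rw [eval_pow, this]
  have h2 : ((2:ℝ) ^ n * n.factorial) ≠ 0 := by positivity
  field_simp

lemma leg_eval_neg_one (n : ℕ) : (leg n).eval (-1) = (-1) ^ n := by
  rw [leg, psin_factor_neg_one, eval_mul, eval_C, eval_iterate_derivative_root]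
  have : ((X:ℝ[X]) - 1).eval (-1) = -2 := by simp; norm_num
  rw [eval_pow, this]
  have h2 : ((2:ℝ) ^ n) ≠ 0 := by positivity
  have h3 : ((n.factorial : ℝ)) ≠ 0 := by positivity
  field_simp
  rw [neg_pow]
  ring

lemma natDegree_psin (n : ℕ) : (psin n).natDegree = 2 * n := by
  rw [psin]
  have h : ((X:ℝ[X]) ^ 2 - 1).natDegree = 2 := by
    simpa using Polynomial.natDegree_X_pow_sub_C (n := 2) (r := (1:ℝ))
  rw [Polynomial.natDegree_pow, h, mul_comm]

lemma monic_psin (n : ℕ) : (psin n).Monic := by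
  rw [psin]
  exact (Polynomial.monic_X_pow_sub_C (1:ℝ) (by norm_num)).pow n

lemma natDegree_leg_le (n : ℕ) : (leg n).natDegree ≤ n := by
  apply le_trans (Polynomial.natDegree_mul_le)
  simp only [Polynomial.natDegree_C, zero_add]
  calc (derivative^[n] (psin n)).natDegree ≤ (psin n).natDegree - n :=
        Polynomial.natDegree_iterate_derivative _ _
    _ ≤ n := by rw [natDegree_psin]; omega

lemma coeff_leg_self (n : ℕ) :
    (leg n).coeff n = ((2:ℝ) ^ n * n.factorial)⁻¹ * (2 * n).descFactorial n := by
  rw [leg, Polynomial.coeff_C_mul, Polynomial.coeff_iterate_derivative]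
  congr 1
  have : n + n = 2 * n := by ring
  rw [this, ← natDegree_psin n, Polynomial.Monic.coeff_natDegree (monic_psin n)]
  simp

lemma poly_intervalIntegrable (f : ℝ[X]) (a b : ℝ) :
    IntervalIntegrable (fun t => f.eval t) volume a b :=
  (f.continuous_aeval).intervalIntegrable _ _

lemma poly_ibp (f g : ℝ[X]) :
    ∫ t in (-1:ℝ)..1, f.eval t * (derivative g).eval t
      = f.eval 1 * g.eval 1 - f.eval (-1) * g.eval (-1)
        - ∫ t in (-1:ℝ)..1, (derivative f).eval t * g.eval t :=
  intervalIntegral.integral_mul_deriv_eq_deriv_mul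
    (fun x _ => f.hasDerivAt x) (fun x _ => g.hasDerivAt x)
    (poly_intervalIntegrable _ _ _) (poly_intervalIntegrable _ _ _)

lemma ibp_iter (f : ℝ[X]) {n : ℕ} : ∀ {k : ℕ}, k ≤ n →
    ∫ t in (-1:ℝ)..1, f.eval t * (derivative^[n] (psin n)).eval t
      = (-1)^k * ∫ t in (-1:ℝ)..1,
          (derivative^[k] f).eval t * (derivative^[n-k] (psin n)).eval t := by
  intro k
  induction k with
  | zero => intro _; simp
  | succ k ih =>
    intro hk
    rw [ih (by omega)]
    have hs : n - k = (n - (k+1)) + 1 := by omega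
    rw [hs, Function.iterate_succ_apply']
    rw [poly_ibp]
    have h1 : ((derivative^[n-(k+1)] (psin n)).eval 1) = 0 :=
      eval_iterate_derivative_psin (by omega) (by norm_num)
    have h2 : ((derivative^[n-(k+1)] (psin n)).eval (-1)) = 0 :=
      eval_iterate_derivative_psin (by omega) (by norm_num)
    rw [h1, h2]
    have hd : derivative (derivative^[k] f) = derivative^[k+1] f :=
      (Function.iterate_succ_apply' _ _ _).symm
    rw [hd]
    ring

lemma integral_pow_mul_leg_lt {m n : ℕ} (h : m < n) :
    ∫ t in (-1:ℝ)..1, t ^ m * (leg n).eval t = 0 := by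
  simp only [leg, eval_mul, eval_C]
  have : ∀ t : ℝ, t ^ m * (((2:ℝ)^n * n.factorial)⁻¹ * (derivative^[n] (psin n)).eval t)
      = ((2:ℝ)^n * n.factorial)⁻¹ * ((X^m : ℝ[X]).eval t * (derivative^[n] (psin n)).eval t) := by
    intro t; simp; ring
  rw [intervalIntegral.integral_congr (fun t _ => this t), intervalIntegral.integral_const_mul]
  rw [ibp_iter _ (show m + 1 ≤ n by omega)]
  have hz : derivative^[m+1] ((X:ℝ[X])^m) = 0 :=
    Polynomial.iterate_derivative_eq_zero (by simp [Polynomial.natDegree_X_pow])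
  rw [hz]
  simp

lemma integral_pow_mul_leg_self (n : ℕ) :
    ∫ t in (-1:ℝ)..1, t ^ n * (leg n).eval t = ((2:ℝ)^n)⁻¹ * In n := by
  simp only [leg, eval_mul, eval_C]
  have : ∀ t : ℝ, t ^ n * (((2:ℝ)^n * n.factorial)⁻¹ * (derivative^[n] (psin n)).eval t)
      = ((2:ℝ)^n * n.factorial)⁻¹ * ((X^n : ℝ[X]).eval t * (derivative^[n] (psin n)).eval t) := by
    intro t; simp; ring
  rw [intervalIntegral.integral_congr (fun t _ => this t), intervalIntegral.integral_const_mul]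
  rw [ibp_iter _ (le_refl n)]
  have hz : derivative^[n] ((X:ℝ[X])^n) = Polynomial.C (n.factorial : ℝ) := by
    rw [Polynomial.iterate_derivative_X_pow_eq_C_mul]
    simp [Nat.descFactorial_self]
  rw [hz]
  have : ∀ t : ℝ, (Polynomial.C (n.factorial : ℝ)).eval t * (derivative^[n-n] (psin n)).eval t
      = (n.factorial : ℝ) * ((-1:ℝ)^n * (1 - t^2)^n) := by
    intro t
    simp only [Nat.sub_self, Function.iterate_zero, id_eq, eval_C, psin]
    rw [eval_pow]
    have he : ((X:ℝ[X])^2 - 1).eval t = (-1) * (1 - t^2) := by simp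
    rw [he, mul_pow]
  rw [intervalIntegral.integral_congr (fun t _ => this t), intervalIntegral.integral_const_mul,
    intervalIntegral.integral_const_mul]
  have h3 : ((-1:ℝ)^n * (-1:ℝ)^n) = 1 := by rw [← mul_pow]; norm_num
  have hnf : ((n.factorial : ℝ)) ≠ 0 := by positivity
  simp only [In]
  set I := ∫ t in (-1:ℝ)..1, (1 - t^2)^n with hI
  have key : ((-1:ℝ))^n * ((n.factorial:ℝ) * ((-1:ℝ))^n * I) = (n.factorial:ℝ) * I := by
    calc ((-1:ℝ))^n * ((n.factorial:ℝ) * ((-1:ℝ))^n * I)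
        = (n.factorial:ℝ) * (((-1:ℝ))^n * ((-1:ℝ))^n) * I := by ring
      _ = (n.factorial:ℝ) * I := by rw [h3]; ring
  rw [mul_inv, mul_assoc]
  congr 1
  have key2 : ((-1:ℝ))^n * ((n.factorial:ℝ) * (((-1:ℝ))^n * I)) = (n.factorial:ℝ) * I := by
    linear_combination (n.factorial:ℝ) * I * h3
  rw [key2, inv_mul_cancel_left₀ hnf]

lemma In_zero : In 0 = 2 := by simp [In]; norm_num

lemma In_succ (n : ℕ) : (2*(n:ℝ)+3) * In (n+1) = (2*(n:ℝ)+2) * In n := by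
  have hv : ∀ x : ℝ, HasDerivAt (fun x : ℝ => -(1-x^2)^(n+1)/(2*(n:ℝ)+2))
      (x*(1-x^2)^n) x := by
    intro x
    have h1 : HasDerivAt (fun x : ℝ => 1-x^2) (-(2*x)) x := by
      simpa using ((hasDerivAt_pow 2 x).const_sub 1)
    have h2 := (h1.fun_pow (n+1)).fun_neg.div_const (2*(n:ℝ)+2)
    refine h2.congr_deriv ?_
    have : (2*(n:ℝ)+2) ≠ 0 := by positivity
    field_simp
    push_cast
    ring
  have hibp := intervalIntegral.integral_mul_deriv_eq_deriv_mul
    (u := fun x : ℝ => x) (v := fun x : ℝ => -(1-x^2)^(n+1)/(2*(n:ℝ)+2))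
    (u' := fun _ : ℝ => (1:ℝ)) (v' := fun x : ℝ => x*(1-x^2)^n)
    (a := (-1:ℝ)) (b := (1:ℝ))
    (fun x _ => hasDerivAt_id x) (fun x _ => hv x)
    (intervalIntegrable_const)
    (((continuous_id.mul (by continuity))).intervalIntegrable _ _)
  simp only [one_pow, neg_one_sq, sub_self, zero_pow (Nat.succ_ne_zero n), neg_zero,
    zero_div, mul_zero, one_mul] at hibp
  -- hibp : ∫ x in -1..1, x * (x*(1-x^2)^n) = 0 - 0 - ∫ x in -1..1, -(1-x^2)^(n+1)/(2n+2)
  have hsplit : In (n+1) = In n - ∫ x in (-1:ℝ)..1, x * (x*(1-x^2)^n) := by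
    rw [In, In, ← intervalIntegral.integral_sub ((by continuity : Continuous fun x:ℝ => (1-x^2)^n).intervalIntegrable _ _) ((by continuity : Continuous fun x:ℝ => x*(x*(1-x^2)^n)).intervalIntegrable _ _)]
    apply intervalIntegral.integral_congr
    intro x _
    ring
  have hdiv : ∫ x in (-1:ℝ)..1, -(1-x^2)^(n+1)/(2*(n:ℝ)+2)
      = -In (n+1) / (2*(n:ℝ)+2) := by
    rw [In, ← intervalIntegral.integral_neg, ← intervalIntegral.integral_div]
  rw [hdiv] at hibp
  have h0 : (2*(n:ℝ)+2) ≠ 0 := by positivity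
  rw [hibp] at hsplit
  field_simp at hsplit
  linarith

lemma Ival (n : ℕ) :
    (2*(n:ℝ)+1) * ((2*n).factorial : ℝ) * In n = 2 * 4^n * ((n.factorial : ℝ))^2 := by
  induction n with
  | zero => simp [In_zero]
  | succ n ih =>
    have h2 : 2*(n+1) = (2*n+1)+1 := by ring
    rw [h2, Nat.factorial_succ, Nat.factorial_succ, Nat.factorial_succ]
    push_cast
    linear_combination ((2*(n:ℝ)+2)*(2*(n:ℝ)+1)*((2*n).factorial:ℝ)) * (In_succ n)
      + (2*(n:ℝ)+2)^2 * ih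

lemma integral_poly_mul_leg (q : ℝ[X]) {n : ℕ} (hq : q.natDegree ≤ n) :
    ∫ t in (-1:ℝ)..1, q.eval t * (leg n).eval t
      = q.coeff n * ∫ t in (-1:ℝ)..1, t^n * (leg n).eval t := by
  have hdeg : q.natDegree < n + 1 := by omega
  have hexp : ∀ t : ℝ, q.eval t * (leg n).eval t
      = ∑ j ∈ Finset.range (n+1), q.coeff j * (t^j * (leg n).eval t) := by
    intro t
    rw [Polynomial.eval_eq_sum_range' hdeg, Finset.sum_mul]
    exact Finset.sum_congr rfl fun j _ => by ring
  rw [intervalIntegral.integral_congr (fun t _ => hexp t)]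
  rw [intervalIntegral.integral_finset_sum]
  · rw [Finset.sum_eq_single n]
    · rw [intervalIntegral.integral_const_mul]
    · intro j hj hjn
      have : j < n := by
        have := Finset.mem_range.mp hj; omega
      rw [intervalIntegral.integral_const_mul, integral_pow_mul_leg_lt this, mul_zero]
    · intro h; exact absurd (Finset.self_mem_range_succ n) h
  · intro j _
    exact (continuous_const.mul ((continuous_pow j).mul ((leg n).continuous_aeval))).intervalIntegrable _ _

lemma norm_leg (n : ℕ) :
    ∫ t in (-1:ℝ)..1, (leg n).eval t * (leg n).eval t = 2 / (2*(n:ℝ)+1) := by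
  rw [integral_poly_mul_leg (leg n) (natDegree_leg_le n), integral_pow_mul_leg_self,
    coeff_leg_self]
  have hfd : ((n.factorial : ℝ)) * ((2*n).descFactorial n : ℝ) = ((2*n).factorial : ℝ) := by
    have := Nat.factorial_mul_descFactorial (show n ≤ 2*n by omega)
    have h2 : 2*n - n = n := by omega
    rw [h2] at this
    exact_mod_cast congrArg (Nat.cast : ℕ → ℝ) this
  have hI := Ival n
  have h1 : ((2:ℝ)^n) ≠ 0 := by positivity
  have h2 : ((n.factorial : ℝ)) ≠ 0 := by positivity
  have h3 : (2*(n:ℝ)+1) ≠ 0 := by positivity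
  have h4 : ((2*n).factorial : ℝ) ≠ 0 := by positivity
  have h44 : ((4:ℝ))^n = 2^n * 2^n := by rw [← mul_pow]; norm_num
  rw [mul_inv]
  field_simp
  apply mul_left_cancel₀ h2
  linear_combination (In n * (2*(n:ℝ)+1)) * hfd + hI + 2*((n.factorial:ℝ))^2 * h44

lemma deriv_sq_sub_one : derivative ((X:ℝ[X])^2 - 1) = 2 * X := by
  rw [derivative_sub, derivative_one, derivative_X_sq, map_ofNat, sub_zero]

lemma base_rel (n : ℕ) :
    ((X:ℝ[X])^2 - 1) * derivative (psin n) = ((2*n : ℕ) : ℝ[X]) * (X * psin n) := by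
  cases n with
  | zero => simp [psin]
  | succ m =>
    rw [psin, Polynomial.derivative_pow, deriv_sq_sub_one, map_natCast, Nat.add_sub_cancel]
    push_cast
    rw [pow_succ]
    ring

lemma leib_rel (n : ℕ) : ∀ k : ℕ,
    ((X:ℝ[X])^2 - 1) * derivative^[k+2] (psin n)
      + ((2*(k+1) : ℕ) : ℝ[X]) * (X * derivative^[k+1] (psin n))
      + ((k*(k+1) : ℕ) : ℝ[X]) * derivative^[k] (psin n)
    = ((2*n : ℕ) : ℝ[X]) * (X * derivative^[k+1] (psin n)
        + (((k+1) : ℕ) : ℝ[X]) * derivative^[k] (psin n)) := by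
  intro k
  induction k with
  | zero =>
    have hb : derivative (psin n) = derivative^[1] (psin n) := rfl
    have h := congrArg derivative (base_rel n)
    simp only [derivative_mul, derivative_natCast_mul, derivative_natCast, derivative_X,
      deriv_sq_sub_one, hb] at h
    simp only [← Function.iterate_succ_apply'] at h
    simp only [Nat.zero_add, Function.iterate_zero_apply] at h ⊢
    push_cast
    push_cast at h
    linear_combination h
  | succ k ih =>
    have h := congrArg derivative ih
    simp only [derivative_add, derivative_mul, derivative_natCast_mul, derivative_natCast,
      derivative_X, deriv_sq_sub_one] at h
    simp only [← Function.iterate_succ_apply'] at h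
    simp only [Nat.succ_eq_add_one] at h ⊢
    push_cast
    push_cast at h
    linear_combination h

lemma ode_psin (n : ℕ) :
    ((X:ℝ[X])^2 - 1) * derivative^[n+2] (psin n) + 2 * X * derivative^[n+1] (psin n)
      = ((n*(n+1) : ℕ) : ℝ[X]) * derivative^[n] (psin n) := by
  have h := leib_rel n n
  push_cast at h ⊢
  linear_combination h

lemma ode_leg (n : ℕ) :
    ((X:ℝ[X])^2 - 1) * derivative (derivative (leg n)) + 2 * X * derivative (leg n)
      = ((n*(n+1) : ℕ) : ℝ[X]) * leg n := by
  rw [leg, Polynomial.derivative_C_mul, Polynomial.derivative_C_mul]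
  have key : derivative (derivative (derivative^[n] (psin n))) = derivative^[n+2] (psin n) := by
    rw [show n+2 = (n+1)+1 from rfl, Function.iterate_succ_apply', Function.iterate_succ_apply']
  have key1 : derivative (derivative^[n] (psin n)) = derivative^[n+1] (psin n) := by
    rw [Function.iterate_succ_apply']
  rw [key, key1]
  linear_combination Polynomial.C (((2:ℝ) ^ n * n.factorial)⁻¹) * (ode_psin n)

lemma ode_leg_eval (n : ℕ) (x : ℝ) :
    (x^2 - 1) * (derivative (derivative (leg n))).eval x + 2 * x * (derivative (leg n)).eval x
      = (n*(n+1) : ℝ) * (leg n).eval x := by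
  have h := congrArg (fun q : ℝ[X] => q.eval x) (ode_leg n)
  simp only [eval_add, eval_mul, eval_sub, eval_pow, eval_X, eval_one, eval_natCast,
    eval_ofNat] at h
  push_cast at h ⊢
  linear_combination h

lemma leg_sq_le {n : ℕ} (hn : 1 ≤ n) {x : ℝ} (hx : x ∈ Icc (-1:ℝ) 1) :
    ((leg n).eval x)^2 ≤ 1 := by
  set L := leg n with hL
  set c : ℝ := (n*(n+1) : ℝ) with hc
  have hcpos : 0 < c := by
    have : (1:ℝ) ≤ (n:ℝ) := by exact_mod_cast hn
    positivity
  set g : ℝ → ℝ := fun x => (L.eval x)^2 + (1-x^2)*((derivative L).eval x)^2 / c with hg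
  have hder : ∀ y : ℝ, HasDerivAt g (2*y*((derivative L).eval y)^2/c) y := by
    intro y
    have h1 : HasDerivAt (fun x : ℝ => (L.eval x)^2)
        (2 * (L.eval y) * ((derivative L).eval y)) y := by
      simpa using (L.hasDerivAt y).fun_pow 2
    have h2 : HasDerivAt (fun x : ℝ => 1-x^2) (-(2*y)) y := by
      simpa using ((hasDerivAt_pow 2 y).const_sub 1)
    have h3 : HasDerivAt (fun x : ℝ => ((derivative L).eval x)^2)
        (2 * ((derivative L).eval y) * ((derivative (derivative L)).eval y)) y := by
      simpa using ((derivative L).hasDerivAt y).fun_pow 2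
    have h4 := ((h2.fun_mul h3).div_const c)
    have h5 := h1.fun_add h4
    refine h5.congr_deriv ?_
    have hode := ode_leg_eval n y
    rw [← hc] at hode
    have hc0 : c ≠ 0 := hcpos.ne'
    field_simp
    linear_combination (-(derivative L).eval y) * hode
  have hcont : Continuous g := by
    apply Continuous.add
    · exact (L.continuous_aeval.pow 2)
    · exact (((continuous_const.sub (continuous_pow 2)).mul
        ((derivative L).continuous_aeval.pow 2)).div_const c)
  have hmono : MonotoneOn g (Icc 0 1) := by
    apply monotoneOn_of_deriv_nonneg (convex_Icc 0 1) hcont.continuousOn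
    · intro y _
      exact (hder y).differentiableAt.differentiableWithinAt
    · intro y hy
      rw [interior_Icc] at hy
      rw [(hder y).deriv]
      have : (0:ℝ) ≤ y := le_of_lt hy.1
      positivity
  have hanti : AntitoneOn g (Icc (-1) 0) := by
    apply antitoneOn_of_deriv_nonpos (convex_Icc (-1) 0) hcont.continuousOn
    · intro y _
      exact (hder y).differentiableAt.differentiableWithinAt
    · intro y hy
      rw [interior_Icc] at hy
      rw [(hder y).deriv]
      have hy0 : y ≤ 0 := le_of_lt hy.2
      have hsq : (0:ℝ) ≤ ((derivative L).eval y)^2 := sq_nonneg _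
      have : 2*y*((derivative L).eval y)^2 ≤ 0 := by nlinarith
      exact div_nonpos_of_nonpos_of_nonneg this (le_of_lt hcpos)
  have hg1 : g 1 = 1 := by
    simp only [hg, hL]
    rw [leg_eval_one]
    norm_num
  have hgm1 : g (-1) = 1 := by
    simp only [hg, hL]
    rw [leg_eval_neg_one]
    have : ((-1:ℝ)^n)^2 = 1 := by
      rw [← pow_mul, mul_comm, pow_mul]
      norm_num
    rw [this]
    norm_num
  have hbound : g x ≤ 1 := by
    rcases le_or_gt 0 x with h0 | h0
    · have := hmono (Set.mem_Icc.mpr ⟨h0, hx.2⟩) (Set.mem_Icc.mpr ⟨zero_le_one, le_refl 1⟩) hx.2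
      rw [hg1] at this; exact this
    · have := hanti (Set.mem_Icc.mpr ⟨le_refl (-1), by norm_num⟩)
        (Set.mem_Icc.mpr ⟨hx.1, le_of_lt h0⟩) hx.1
      rw [hgm1] at this; exact this
  have hsec : 0 ≤ (1-x^2)*((derivative L).eval x)^2 / c := by
    have h1 : (0:ℝ) ≤ 1 - x^2 := by nlinarith [hx.1, hx.2]
    positivity
  calc ((leg n).eval x)^2 = g x - (1-x^2)*((derivative L).eval x)^2 / c := by
        simp only [hg, hL]; ring
    _ ≤ g x := by linarith
    _ ≤ 1 := hbound

lemma leg_zero : leg 0 = 1 := by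
  simp [leg, psin]

lemma leg_sq_le' (n : ℕ) {x : ℝ} (hx : x ∈ Icc (-1:ℝ) 1) :
    ((leg n).eval x)^2 ≤ 1 := by
  cases n with
  | zero => simp [leg_zero]
  | succ m => exact leg_sq_le (Nat.succ_le_succ (Nat.zero_le m)) hx

lemma integral_leg_mul_leg {m n : ℕ} (h : m ≠ n) :
    ∫ t in (-1:ℝ)..1, (leg m).eval t * (leg n).eval t = 0 := by
  rcases Nat.lt_or_ge m n with hlt | hge
  · rw [integral_poly_mul_leg (leg m) (le_of_lt (lt_of_le_of_lt (natDegree_leg_le m) hlt))]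
    rw [Polynomial.coeff_eq_zero_of_natDegree_lt (lt_of_le_of_lt (natDegree_leg_le m) hlt)]
    ring
  · have hlt : n < m := lt_of_le_of_ne hge (Ne.symm h)
    have : ∀ t : ℝ, (leg m).eval t * (leg n).eval t = (leg n).eval t * (leg m).eval t :=
      fun t => mul_comm _ _
    rw [intervalIntegral.integral_congr (fun t _ => this t)]
    rw [integral_poly_mul_leg (leg n) (le_of_lt (lt_of_le_of_lt (natDegree_leg_le n) hlt))]
    rw [Polynomial.coeff_eq_zero_of_natDegree_lt (lt_of_le_of_lt (natDegree_leg_le n) hlt)]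
    ring

lemma cn_sq (k : ℕ) : (cn k)^2 = (2*(k:ℝ)+1)/2 := by
  rw [cn, Real.sq_sqrt]; positivity

lemma orthonormal_leg (k l : ℕ) :
    ∫ t in (-1:ℝ)..1, (cn k * (leg k).eval t) * (cn l * (leg l).eval t)
      = if k = l then (1:ℝ) else 0 := by
  have : ∀ t : ℝ, (cn k * (leg k).eval t) * (cn l * (leg l).eval t)
      = (cn k * cn l) * ((leg k).eval t * (leg l).eval t) := fun t => by ring
  rw [intervalIntegral.integral_congr (fun t _ => this t), intervalIntegral.integral_const_mul]
  by_cases h : k = l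
  · subst h
    rw [norm_leg, if_pos rfl, ← sq, cn_sq]
    have : 2*(k:ℝ)+1 ≠ 0 := by positivity
    field_simp
  · rw [integral_leg_mul_leg h, if_neg h, mul_zero]

lemma sum_odd (p : ℕ) : ∑ k ∈ Finset.range p, (2*k+1) = p^2 := by
  induction p with
  | zero => simp
  | succ m ih => rw [Finset.sum_range_succ, ih]; ring

lemma leg_eval_sum {p : ℕ} (k : Fin p) (t : ℝ) :
    ∑ j : Fin p, (leg (k:ℕ)).coeff (j:ℕ) * t^(j:ℕ) = (leg (k:ℕ)).eval t := by
  rw [Polynomial.eval_eq_sum_range' (lt_of_le_of_lt (natDegree_leg_le (k:ℕ)) k.isLt)]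
  exact Fin.sum_univ_eq_sum_range (fun j => (leg (k:ℕ)).coeff j * t^j) p

/-- For the monomial basis `Ψ(t) = (1, t, …, t^{p-1})` on `[-1,1]` and the Gram matrix
`A² = ∫ ΨΨᵀ`, the polynomial `P(t) = Ψ(t)ᵀ A⁻² Ψ(t)` attains its maximum `p²/2` on `[-1,1]`
at `t = ±1`. -/
theorem christoffel_monomial_max {p : ℕ} (hp : 1 ≤ p)
    (Ψ : ℝ → Fin p → ℝ) (hΨ : ∀ t i, Ψ t i = t ^ (i : ℕ))
    (A2 : Matrix (Fin p) (Fin p) ℝ)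
    (hA2 : A2 = Matrix.of fun i j => ∫ t in Icc (-1 : ℝ) 1, Ψ t i * Ψ t j) :
    (∀ t ∈ Icc (-1 : ℝ) 1, Ψ t ⬝ᵥ (A2⁻¹ *ᵥ Ψ t) ≤ (p : ℝ) ^ 2 / 2) ∧
      Ψ 1 ⬝ᵥ (A2⁻¹ *ᵥ Ψ 1) = (p : ℝ) ^ 2 / 2 ∧
      Ψ (-1) ⬝ᵥ (A2⁻¹ *ᵥ Ψ (-1)) = (p : ℝ) ^ 2 / 2 := by
  -- A2 entries as interval integrals
  have hA2' : ∀ i j : Fin p, A2 i j = ∫ t in (-1:ℝ)..1, t^(i:ℕ) * t^(j:ℕ) := by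
    intro i j
    rw [hA2]
    show (∫ t in Icc (-1 : ℝ) 1, Ψ t i * Ψ t j) = _
    rw [MeasureTheory.integral_Icc_eq_integral_Ioc,
      ← intervalIntegral.integral_of_le (by norm_num : (-1:ℝ) ≤ 1)]
    exact intervalIntegral.integral_congr (fun t _ => by rw [hΨ, hΨ])
  set Cm : Matrix (Fin p) (Fin p) ℝ :=
    Matrix.of (fun k j : Fin p => cn (k:ℕ) * (leg (k:ℕ)).coeff (j:ℕ)) with hCm
  -- the key evaluation of Cm *ᵥ Ψ t
  have hphi : ∀ (t : ℝ) (k : Fin p),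
      (Cm *ᵥ Ψ t) k = cn (k:ℕ) * (leg (k:ℕ)).eval t := by
    intro t k
    show ∑ j : Fin p, Cm k j * Ψ t j = _
    rw [← leg_eval_sum k t, Finset.mul_sum]
    refine Finset.sum_congr rfl fun j _ => ?_
    rw [hΨ]
    show (cn (k:ℕ) * (leg (k:ℕ)).coeff (j:ℕ)) * t ^ (j:ℕ) = _
    ring
  -- Gram identity
  have step1 : ∀ k j : Fin p, (Cm * A2) k j
      = ∫ t in (-1:ℝ)..1, (cn (k:ℕ) * (leg (k:ℕ)).eval t) * t^(j:ℕ) := by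
    intro k j
    rw [Matrix.mul_apply]
    have h1 : ∀ i : Fin p, Cm k i * A2 i j
        = ∫ t in (-1:ℝ)..1, (Cm k i * t^(i:ℕ)) * t^(j:ℕ) := by
      intro i
      rw [hA2' i j, ← intervalIntegral.integral_const_mul]
      exact intervalIntegral.integral_congr (fun t _ => by ring)
    simp_rw [h1]
    rw [← intervalIntegral.integral_finset_sum (fun i _ =>
      ((continuous_const.fun_mul (continuous_pow _)).fun_mul (continuous_pow _)).intervalIntegrable _ _)]
    refine intervalIntegral.integral_congr fun t _ => ?_
    rw [← Finset.sum_mul]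
    congr 1
    have := hphi t k
    rw [← this]
    show ∑ i : Fin p, Cm k i * t ^ (i:ℕ) = ∑ i : Fin p, Cm k i * Ψ t i
    exact Finset.sum_congr rfl fun i _ => by rw [hΨ]
  have hgram : Cm * A2 * Cmᵀ = 1 := by
    ext k l
    rw [Matrix.mul_apply]
    have h2 : ∀ j : Fin p, (Cm * A2) k j * Cmᵀ j l
        = ∫ t in (-1:ℝ)..1, (cn (k:ℕ) * (leg (k:ℕ)).eval t) * (Cm l j * t^(j:ℕ)) := by
      intro j
      rw [step1 k j, Matrix.transpose_apply, ← intervalIntegral.integral_mul_const]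
      exact intervalIntegral.integral_congr (fun t _ => by ring)
    simp_rw [h2]
    rw [← intervalIntegral.integral_finset_sum (fun j _ =>
      ((continuous_const.fun_mul ((leg (k:ℕ)).continuous)).fun_mul
        (continuous_const.fun_mul (continuous_pow _))).intervalIntegrable _ _)]
    have h3 : ∀ t : ℝ, (∑ j : Fin p, (cn (k:ℕ) * (leg (k:ℕ)).eval t) * (Cm l j * t^(j:ℕ)))
        = (cn (k:ℕ) * (leg (k:ℕ)).eval t) * (cn (l:ℕ) * (leg (l:ℕ)).eval t) := by
      intro t
      rw [← Finset.mul_sum]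
      congr 1
      rw [← hphi t l]
      show ∑ j : Fin p, Cm l j * t ^ (j:ℕ) = ∑ j : Fin p, Cm l j * Ψ t j
      exact Finset.sum_congr rfl fun j _ => by rw [hΨ]
    rw [intervalIntegral.integral_congr (fun t _ => h3 t), orthonormal_leg, Matrix.one_apply]
    by_cases h : k = l
    · subst h; simp
    · rw [if_neg h, if_neg (fun hc => h (Fin.val_injective hc))]
  -- invert
  have h1 : Cm * (A2 * Cmᵀ) = 1 := by rw [← Matrix.mul_assoc]; exact hgram
  have h2 : (A2 * Cmᵀ) * Cm = 1 := mul_eq_one_comm.mp h1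
  have h3 : A2 * (Cmᵀ * Cm) = 1 := by rw [← Matrix.mul_assoc]; exact h2
  have hinv : A2⁻¹ = Cmᵀ * Cm := Matrix.inv_eq_right_inv h3
  -- quadratic form as sum of squares
  have hquad : ∀ t : ℝ, Ψ t ⬝ᵥ (A2⁻¹ *ᵥ Ψ t)
      = ∑ k : Fin p, (cn (k:ℕ))^2 * ((leg (k:ℕ)).eval t)^2 := by
    intro t
    rw [hinv, ← Matrix.mulVec_mulVec, Matrix.dotProduct_mulVec, Matrix.vecMul_transpose]
    rw [dotProduct]
    refine Finset.sum_congr rfl fun k _ => ?_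
    rw [hphi t k]
    ring
  have hsum : ∑ k : Fin p, (2*((k:ℕ):ℝ)+1) = (p:ℝ)^2 := by
    have := sum_odd p
    have hcast : ((∑ k ∈ Finset.range p, (2*k+1) : ℕ) : ℝ) = ((p^2 : ℕ) : ℝ) := by
       exact_mod_cast this
    push_cast at hcast
    rw [← hcast, ← Fin.sum_univ_eq_sum_range (fun k => (2*(k:ℝ)+1))]
  refine ⟨?_, ?_, ?_⟩
  · intro t ht
    rw [hquad t]
    have hterm : ∀ k : Fin p, (cn (k:ℕ))^2 * ((leg (k:ℕ)).eval t)^2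
        ≤ (2*((k:ℕ):ℝ)+1)/2 := by
      intro k
      rw [cn_sq]
      have h1 := leg_sq_le' (k:ℕ) ht
      have h2 : (0:ℝ) ≤ (2*((k:ℕ):ℝ)+1)/2 := by positivity
      nlinarith
    calc ∑ k : Fin p, (cn (k:ℕ))^2 * ((leg (k:ℕ)).eval t)^2
        ≤ ∑ k : Fin p, (2*((k:ℕ):ℝ)+1)/2 := Finset.sum_le_sum (fun k _ => hterm k)
      _ = (p:ℝ)^2/2 := by rw [← Finset.sum_div, hsum]
  · rw [hquad 1]
    have : ∀ k : Fin p, (cn (k:ℕ))^2 * ((leg (k:ℕ)).eval 1)^2 = (2*((k:ℕ):ℝ)+1)/2 := by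
      intro k; rw [leg_eval_one, cn_sq]; ring
    rw [Finset.sum_congr rfl (fun k _ => this k), ← Finset.sum_div, hsum]
  · rw [hquad (-1)]
    have : ∀ k : Fin p, (cn (k:ℕ))^2 * ((leg (k:ℕ)).eval (-1))^2 = (2*((k:ℕ):ℝ)+1)/2 := by
      intro k
      rw [leg_eval_neg_one, cn_sq, ← pow_mul, mul_comm (k:ℕ) 2, pow_mul]
      norm_num
    rw [Finset.sum_congr rfl (fun k _ => this k), ← Finset.sum_div, hsum]
end

section
/- Let g : ℝ^p → ℝ be twice continuously differentiable and concave, with θ* a maximizer of g (so ∇g(θ*) = 0). Suppose d₀² is a positive-definite matrix and ε ∈ [0,1) are such that for points θ₁, θ₂ on the segment [θ*, θ•] appearing in the second-order Taylor expansions one has vᵀ((−∇²g(θᵢ)))v ≥ (1−ε)‖d₀ v‖² for all v. Then adding the two Taylor expansions of g at θ* and θ• yields (1−ε)‖d₀(θ* − θ•)‖² ≤ (∇g(θ•) − ∇g(θ*))ᵀ(θ* − θ•), and hence by Cauchy–Schwarz ‖d₀(θ* − θ•)‖ ≤ (1−ε)⁻¹ ‖d₀⁻¹(∇g(θ*) −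 ∇g(θ•))‖. -/
open Set

/-- Quadratic bracketing of the bias: for a concave `C²` function `g` maximized at `θ*`, if the
negative Hessian dominates `(1−ε) d₀²` on the segment `[θ*, θ•]`, then
`(1−ε)‖d₀(θ*−θ•)‖² ≤ (∇g(θ•) − ∇g(θ*))ᵀ(θ*−θ•)` and consequently
`‖d₀(θ*−θ•)‖ ≤ (1−ε)⁻¹‖d₀⁻¹(∇g(θ*) − ∇g(θ•))‖`. -/
theorem bias_bound_via_hessian {p : ℕ}
    (g : EuclideanSpace ℝ (Fin p) → ℝ) (hg : ContDiff ℝ 2 g)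
    (hconc : ConcaveOn ℝ univ g)
    (G : EuclideanSpace ℝ (Fin p) → EuclideanSpace ℝ (Fin p))
    (hgrad : ∀ θ, HasGradientAt g (G θ) θ)
    (H : EuclideanSpace ℝ (Fin p) → EuclideanSpace ℝ (Fin p) →L[ℝ] EuclideanSpace ℝ (Fin p))
    (hH : ∀ θ, HasFDerivAt G (H θ) θ)
    (θstar θbul : EuclideanSpace ℝ (Fin p))
    (hmax : ∀ θ, g θ ≤ g θstar) (hgrad0 : G θstar = 0)
    (d₀ : EuclideanSpace ℝ (Fin p) ≃L[ℝ] EuclideanSpace ℝ (Fin p))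
    (hd₀sym : ∀ u v : EuclideanSpace ℝ (Fin p), (inner ℝ (d₀ u) v : ℝ) = inner ℝ u (d₀ v))
    (hd₀pos : ∀ v : EuclideanSpace ℝ (Fin p), v ≠ 0 → (0 : ℝ) < inner ℝ v (d₀ v))
    (ε : ℝ) (hε0 : 0 ≤ ε) (hε1 : ε < 1)
    (hbound : ∀ θ ∈ segment ℝ θstar θbul, ∀ v : EuclideanSpace ℝ (Fin p),
      (1 - ε) * ‖d₀ v‖ ^ 2 ≤ -(inner ℝ v (H θ v) : ℝ)) :
    (1 - ε) * ‖d₀ (θstar - θbul)‖ ^ 2 ≤ (inner ℝ (G θbul - G θstar) (θstar - θbul) : ℝ) ∧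
      ‖d₀ (θstar - θbul)‖ ≤ (1 - ε)⁻¹ * ‖d₀.symm (G θstar - G θbul)‖ := by

  set v := θstar - θbul with hv
  set w := θbul - θstar with hw
  have hwv : w = -v := by rw [hv, hw]; abel
  set c : ℝ := (1 - ε) * ‖d₀ v‖ ^ 2 with hc
  set L : ℝ → EuclideanSpace ℝ (Fin p) := fun t => θstar + t • w with hLdef
  have hLseg : ∀ t ∈ Icc (0:ℝ) 1, L t ∈ segment ℝ θstar θbul := by
    intro t ht
    rw [segment_eq_image']
    exact ⟨t, ht, rfl⟩
  have hφ : ∀ t : ℝ, HasDerivAt (fun s => (inner ℝ v (G (L s)) : ℝ))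
      ((inner ℝ v (H (L t) w) : ℝ)) t := by
    intro t
    have h1 : HasDerivAt L w t := by
      simpa [hLdef] using ((hasDerivAt_id t).smul_const w).const_add θstar
    have h2 : HasDerivAt (fun s => G (L s)) (H (L t) w) t :=
      (hH (L t)).comp_hasDerivAt t h1
    exact ((innerSL ℝ v).hasFDerivAt.comp_hasDerivAt t h2)
  have hψ : ∀ t : ℝ, HasDerivAt (fun s => (inner ℝ v (G (L s)) : ℝ) - c * s)
      ((inner ℝ v (H (L t) w) : ℝ) - c) t := by
    intro t
    exact (hφ t).sub (by simpa using (hasDerivAt_id t).const_mul c)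
  have hderiv_nonneg : ∀ t ∈ Icc (0:ℝ) 1, 0 ≤ (inner ℝ v (H (L t) w) : ℝ) - c := by
    intro t ht
    have hb := hbound (L t) (hLseg t ht) v
    have : (inner ℝ v (H (L t) w) : ℝ) = -(inner ℝ v (H (L t) v) : ℝ) := by
      rw [hwv, map_neg, inner_neg_right]
    rw [this]
    linarith
  have hmono : MonotoneOn (fun t => (inner ℝ v (G (L t)) : ℝ) - c * t) (Icc 0 1) := by
    apply monotoneOn_of_deriv_nonneg (convex_Icc 0 1)
    · exact Continuous.continuousOn (by
        have : Differentiable ℝ (fun t => (inner ℝ v (G (L t)) : ℝ) - c * t) :=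
          fun t => (hψ t).differentiableAt
        exact this.continuous)
    · intro t _
      exact (hψ t).differentiableAt.differentiableWithinAt
    · intro t ht
      rw [interior_Icc] at ht
      rw [(hψ t).deriv]
      exact hderiv_nonneg t ⟨le_of_lt ht.1, le_of_lt ht.2⟩
  have key : c ≤ (inner ℝ v (G θbul) : ℝ) := by
    have h01 := hmono (left_mem_Icc.2 zero_le_one) (right_mem_Icc.2 zero_le_one) zero_le_one
    have hL0 : L 0 = θstar := by simp [hLdef]
    have hL1 : L 1 = θbul := by simp [hLdef, hw]
    simp only [hL0, hL1, hgrad0, inner_zero_right, mul_zero, mul_one, sub_zero] at h01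
    linarith
  have hfirst : (1 - ε) * ‖d₀ v‖ ^ 2 ≤ (inner ℝ (G θbul - G θstar) v : ℝ) := by
    rw [hgrad0, sub_zero, real_inner_comm]
    exact key
  refine ⟨hfirst, ?_⟩
  have hCS : (inner ℝ v (G θbul) : ℝ) ≤ ‖d₀ v‖ * ‖d₀.symm (G θbul)‖ := by
    have heq : (inner ℝ v (G θbul) : ℝ) = inner ℝ (d₀ v) (d₀.symm (G θbul)) := by
      rw [hd₀sym v (d₀.symm (G θbul))]
      simp
    rw [heq]
    exact real_inner_le_norm _ _
  have hnormeq : ‖d₀.symm (G θstar - G θbul)‖ = ‖d₀.symm (G θbul)‖ := by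
    rw [hgrad0, zero_sub, map_neg, norm_neg]
  rw [hnormeq]
  have h1ε : 0 < 1 - ε := by linarith
  rcases eq_or_lt_of_le (norm_nonneg (d₀ v)) with h0 | h0
  · rw [← h0]
    positivity
  · have hc2 : (1 - ε) * ‖d₀ v‖ ^ 2 ≤ ‖d₀ v‖ * ‖d₀.symm (G θbul)‖ := le_trans key hCS
    rw [le_inv_mul_iff₀ h1ε]
    nlinarith
end

section
/- Suppose L(θ) = Sᵀθ − A(θ) with A : ℝ^p → ℝ twice continuously differentiable, and let θ* satisfy ∇E L(θ*) = 0 so E S = ∇A(θ*). If ‖D⁻¹(S − ES)‖ ≤ ζ and for all θ̄ on the segment [θ*, θ]: ∇²A(θ̄) ⪰ (1 − δ) D² with δ < 1, then for every θ with ‖D(θ − θ*)‖ = r₀ and r₀(1−δ) ≥ 2ζ, it holds L(θ) − L(θ*) ≤ ζ r₀ − ((1−δ)/2) r₀² ≤ 0. -/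
open Set

/-- Auxiliary lemma: second-order lower bound via twice monotonicity argument. -/
theorem taylor_lower_bound_aux {p : ℕ}
    (A : EuclideanSpace ℝ (Fin p) → ℝ)
    (G : EuclideanSpace ℝ (Fin p) → EuclideanSpace ℝ (Fin p))
    (hG : ∀ θ, HasGradientAt A (G θ) θ)
    (HA : EuclideanSpace ℝ (Fin p) → EuclideanSpace ℝ (Fin p) →L[ℝ] EuclideanSpace ℝ (Fin p))
    (hHA : ∀ θ, HasFDerivAt G (HA θ) θ)
    (θstar θ : EuclideanSpace ℝ (Fin p)) (k : ℝ)
    (hk : ∀ θbar ∈ segment ℝ θstar θ,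
      2 * k ≤ (inner ℝ (θ - θstar) (HA θbar (θ - θstar)) : ℝ)) :
    A θstar + (inner ℝ (G θstar) (θ - θstar) : ℝ) + k ≤ A θ := by
  set v := θ - θstar with hv
  set c : ℝ → EuclideanSpace ℝ (Fin p) := fun t => θstar + t • v with hc
  have hcmem : ∀ t ∈ Icc (0:ℝ) 1, c t ∈ segment ℝ θstar θ := by
    intro t ht
    rw [segment_eq_image']
    exact ⟨t, ht, rfl⟩
  have hcderiv : ∀ t : ℝ, HasDerivAt c v t := by
    intro t
    simpa only [one_smul, id] using ((hasDerivAt_id t).smul_const v).const_add θstar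
  set φ : ℝ → ℝ := fun t => (inner ℝ (G (c t)) v : ℝ) with hφ
  set F : ℝ → ℝ := fun t => A (c t) - t * φ 0 - t ^ 2 * k with hF
  set F' : ℝ → ℝ := fun t => φ t - φ 0 - 2 * t * k with hF'
  have hgderiv : ∀ t : ℝ, HasDerivAt (fun s => A (c s)) (φ t) t := by
    intro t
    have h1 := (hG (c t)).hasFDerivAt.comp_hasDerivAt t (hcderiv t)
    simp only [InnerProductSpace.toDual_apply_apply] at h1
    exact h1
  have hφderiv : ∀ t : ℝ, HasDerivAt φ ((inner ℝ v (HA (c t) v) : ℝ)) t := by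
    intro t
    have h1 : HasDerivAt (fun s => G (c s)) (HA (c t) v) t :=
      (hHA (c t)).comp_hasDerivAt t (hcderiv t)
    have h2 : HasDerivAt (fun s => (inner ℝ (G (c s)) v : ℝ))
        (((innerSL ℝ).flip v) (HA (c t) v)) t :=
      (((innerSL ℝ).flip v).hasFDerivAt).comp_hasDerivAt t h1
    have h3 : (((innerSL ℝ).flip v) (HA (c t) v)) = (inner ℝ v (HA (c t) v) : ℝ) := by
      simp only [ContinuousLinearMap.flip_apply, innerSL_apply_apply]
      exact real_inner_comm _ _
    rw [h3] at h2
    exact h2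
  have hFderiv : ∀ t : ℝ, HasDerivAt F (F' t) t := by
    intro t
    have h1 : HasDerivAt (fun s : ℝ => s * φ 0) (φ 0) t := by
      simpa using (hasDerivAt_id t).mul_const (φ 0)
    have h2 : HasDerivAt (fun s : ℝ => s ^ 2 * k) (2 * t * k) t := by
      simpa [mul_comm] using (hasDerivAt_pow 2 t).mul_const k
    exact ((hgderiv t).sub h1).sub h2
  have hF'deriv : ∀ t : ℝ, HasDerivAt F' ((inner ℝ v (HA (c t) v) : ℝ) - 2 * k) t := by
    intro t
    have h2 : HasDerivAt (fun s : ℝ => 2 * s * k) (2 * k) t := by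
      have := ((hasDerivAt_id t).const_mul (2:ℝ)).mul_const k
      simpa [mul_comm, mul_assoc] using this
    have h3 := (((hφderiv t).sub (hasDerivAt_const t (φ 0))).sub h2)
    rw [sub_zero] at h3
    exact h3
  -- F' is monotone on [0,1]
  have hF'mono : MonotoneOn F' (Icc (0:ℝ) 1) := by
    apply monotoneOn_of_deriv_nonneg (convex_Icc 0 1)
    · exact fun t _ => (hF'deriv t).continuousAt.continuousWithinAt
    · intro t ht
      exact ((hF'deriv t).differentiableAt).differentiableWithinAt
    · intro t ht
      rw [interior_Icc] at ht
      rw [(hF'deriv t).deriv]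
      have := hk (c t) (hcmem t ⟨le_of_lt ht.1, le_of_lt ht.2⟩)
      linarith
  have hF'0 : F' 0 = 0 := by simp [hF']
  have hF'nonneg : ∀ t ∈ Icc (0:ℝ) 1, 0 ≤ F' t := by
    intro t ht
    have := hF'mono (left_mem_Icc.mpr zero_le_one) ht ht.1
    rw [hF'0] at this
    exact this
  have hFmono : MonotoneOn F (Icc (0:ℝ) 1) := by
    apply monotoneOn_of_deriv_nonneg (convex_Icc 0 1)
    · exact fun t _ => (hFderiv t).continuousAt.continuousWithinAt
    · intro t ht
      exact ((hFderiv t).differentiableAt).differentiableWithinAt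
    · intro t ht
      rw [interior_Icc] at ht
      rw [(hFderiv t).deriv]
      exact hF'nonneg t ⟨le_of_lt ht.1, le_of_lt ht.2⟩
  have hF01 : F 0 ≤ F 1 :=
    hFmono (left_mem_Icc.mpr zero_le_one) (right_mem_Icc.mpr zero_le_one) zero_le_one
  have hc0 : c 0 = θstar := by simp [hc]
  have hc1 : c 1 = θ := by simp [hc, hv]
  have hFs : F 0 = A θstar := by simp [hF, hc0]
  have hF1 : F 1 = A θ - φ 0 - k := by simp [hF, hc1]
  have hφ0 : φ 0 = (inner ℝ (G θstar) v : ℝ) := by simp [hφ, hc0]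
  rw [hFs, hF1, hφ0] at hF01
  linarith

/-- The key deterministic bound in the concentration theorem: for `L(θ) = Sᵀθ − A(θ)` with
`E S = ∇A(θ*)`, score bound `‖D⁻¹(S − ES)‖ ≤ ζ` and Hessian lower bound
`∇²A ⪰ (1−δ)D²` on the segment, every `θ` with `‖D(θ − θ*)‖ = r₀` and `r₀(1−δ) ≥ 2ζ`
satisfies `L(θ) − L(θ*) ≤ ζ r₀ − ((1−δ)/2) r₀² ≤ 0`. -/
theorem likelihood_decrease_on_sphere {p : ℕ}
    (S ES : EuclideanSpace ℝ (Fin p))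
    (A : EuclideanSpace ℝ (Fin p) → ℝ) (hA : ContDiff ℝ 2 A)
    (G : EuclideanSpace ℝ (Fin p) → EuclideanSpace ℝ (Fin p))
    (hG : ∀ θ, HasGradientAt A (G θ) θ)
    (HA : EuclideanSpace ℝ (Fin p) → EuclideanSpace ℝ (Fin p) →L[ℝ] EuclideanSpace ℝ (Fin p))
    (hHA : ∀ θ, HasFDerivAt G (HA θ) θ)
    (θstar : EuclideanSpace ℝ (Fin p)) (hES : ES = G θstar)
    (D : EuclideanSpace ℝ (Fin p) ≃L[ℝ] EuclideanSpace ℝ (Fin p))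
    (hDsym : ∀ u v : EuclideanSpace ℝ (Fin p), (inner ℝ (D u) v : ℝ) = inner ℝ u (D v))
    (hDpos : ∀ v : EuclideanSpace ℝ (Fin p), v ≠ 0 → (0 : ℝ) < inner ℝ v (D v))
    (ζ r₀ δ : ℝ) (hζ : 0 < ζ) (hr₀ : 0 < r₀) (hδ0 : 0 ≤ δ) (hδ1 : δ < 1)
    (hscore : ‖D.symm (S - ES)‖ ≤ ζ) (hcond : r₀ * (1 - δ) ≥ 2 * ζ) :
    ∀ θ : EuclideanSpace ℝ (Fin p),
      (∀ θbar ∈ segment ℝ θstar θ, ∀ v : EuclideanSpace ℝ (Fin p),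
        (1 - δ) * ‖D v‖ ^ 2 ≤ (inner ℝ v (HA θbar v) : ℝ)) →
      ‖D (θ - θstar)‖ = r₀ →
      ((inner ℝ S θ : ℝ) - A θ) - ((inner ℝ S θstar : ℝ) - A θstar)
          ≤ ζ * r₀ - (1 - δ) / 2 * r₀ ^ 2 ∧
        ζ * r₀ - (1 - δ) / 2 * r₀ ^ 2 ≤ 0 := by
  intro θ hHess hsphere
  set v := θ - θstar with hv
  -- Taylor lower bound
  have hk : ∀ θbar ∈ segment ℝ θstar θ,
      2 * ((1 - δ) / 2 * r₀ ^ 2) ≤ (inner ℝ v (HA θbar v) : ℝ) := by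
    intro θbar hθbar
    have := hHess θbar hθbar v
    rw [hsphere] at this
    linarith
  have htaylor := taylor_lower_bound_aux A G hG HA hHA θstar θ ((1 - δ) / 2 * r₀ ^ 2) hk
  -- Score bound: ⟪S - ES, v⟫ ≤ ζ * r₀
  have hscorebd : (inner ℝ (S - ES) v : ℝ) ≤ ζ * r₀ := by
    have h1 : (inner ℝ (S - ES) v : ℝ) = inner ℝ (D.symm (S - ES)) (D v) := by
      rw [← hDsym (D.symm (S - ES)) v, D.apply_symm_apply]
    rw [h1]
    calc (inner ℝ (D.symm (S - ES)) (D v) : ℝ)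
        ≤ ‖D.symm (S - ES)‖ * ‖D v‖ := real_inner_le_norm _ _
      _ ≤ ζ * r₀ := by
          rw [hsphere]
          exact mul_le_mul_of_nonneg_right hscore hr₀.le
  constructor
  · have hSv : (inner ℝ S θ : ℝ) - (inner ℝ S θstar : ℝ) = inner ℝ S v := by
      rw [hv, inner_sub_right]
    have hsplit : (inner ℝ S v : ℝ) = (inner ℝ (S - ES) v : ℝ) + (inner ℝ (G θstar) v : ℝ) := by
      rw [inner_sub_left, hES]; ring
    have : ((inner ℝ S θ : ℝ) - A θ) - ((inner ℝ S θstar : ℝ) - A θstar)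
        = (inner ℝ (S - ES) v : ℝ) + (inner ℝ (G θstar) v : ℝ) - (A θ - A θstar) := by
      rw [← hsplit, ← hSv]; ring
    rw [this]
    linarith
  · nlinarith [hr₀.le, hζ.le]
end
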